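/- arXiv:1710.10792 — 6 statements merged into one kernel-verified Lean document; each statement's English description precedes it below -/
import Mathlib

section
/- Hoffman–Wielandt inequality: for any two n×n Hermitian matrices A and B with complex entries, if λ_1(A) ≥ λ_2(A) ≥ … ≥ λ_n(A) and λ_1(B) ≥ … ≥ λ_n(B) denote their eigenvalues listed in decreasing order (with multiplicity), then ∑_{i=1}^n (λ_i(A) − λ_i(B))² ≤ Tr((A − B)²). -/
/-!
Expanding the square, `Tr ((A - B)²) = ∑ aᵢ² - 2 Re Tr (A B) + ∑ bᵢ²`, so it suffices to bound
`Re Tr (A B)` by `∑ aᵢ bᵢ` for the decreasingly sorted eigenvalues. Writing `A = U D_a U*` and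
`B = V D_b V*`, one gets `Re Tr (A B) = ∑ᵢⱼ |Wᵢⱼ|² aᵢ bⱼ` with `W = U* V` unitary, so the matrix
`(|Wᵢⱼ|²)` is doubly stochastic. A linear function on the Birkhoff polytope is maximized at a
vertex, that is, a permutation matrix, and by the rearrangement inequality `∑ aᵢ b_{π i}` is
largest when both sequences are sorted the same way.
-/

open Matrix

theorem Monovary.sum_mul_comp_perm_le_of_eq_comp {ι α : Type*} [Fintype ι] [Semiring α]
    [LinearOrder α] [IsStrictOrderedRing α] [ExistsAddOfLE α] {f g a b : ι → α}
    (hfg : Monovary f g) {σ τ : Equiv.Perm ι} (ha : f = a ∘ σ) (hb : g = b ∘ τ)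
    (π : Equiv.Perm ι) : ∑ i, a i * b (π i) ≤ ∑ i, f i * g i := by
  subst ha hb
  calc ∑ i, a i * b (π i) = ∑ i, a (σ i) * b (τ ((σ.trans π).trans τ.symm i)) := by
        rw [← Equiv.sum_comp σ]; simp
    _ ≤ _ := hfg.sum_mul_comp_perm_le_sum_mul

namespace Matrix

theorem trace_sub_mul_sub {n R : Type*} [Fintype n] [CommRing R] (A B : Matrix n n R) :
    ((A - B) * (A - B)).trace = (A * A).trace - 2 * (A * B).trace + (B * B).trace := by
  rw [sub_mul, mul_sub, mul_sub, trace_sub, trace_sub, trace_sub, trace_mul_comm B A]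
  ring

variable {𝕜 n : Type*} [RCLike 𝕜] [Fintype n] [DecidableEq n]

lemma re_trace_diagonal_mul_mul_diagonal_mul_star (a b : n → ℝ) (W : Matrix n n 𝕜) :
    RCLike.re (diagonal (RCLike.ofReal ∘ a) * W * diagonal (RCLike.ofReal ∘ b) * star W).trace
      = a ⬝ᵥ of (fun i j => ‖W i j‖ ^ 2) *ᵥ b := by
  have hentry (i j : n) :
      (diagonal (RCLike.ofReal ∘ a) * W * diagonal (RCLike.ofReal ∘ b) : Matrix n n 𝕜) i j
      * star W j i = ((a i * (‖W i j‖ ^ 2 * b j) : ℝ) : 𝕜) := by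
    rw [mul_diagonal, diagonal_mul, star_apply, RCLike.star_def, mul_right_comm,
      mul_assoc _ (W i j), RCLike.mul_conj]
    simp only [Function.comp_apply]; push_cast; ring
  simp only [trace, diag_apply, mul_apply (M := _ * _ * _), hentry, map_sum, RCLike.ofReal_re,
    dotProduct, mulVec, Finset.mul_sum, of_apply]

lemma sum_norm_sq_row_eq_one_of_mem_unitaryGroup {W : Matrix n n 𝕜} (hW : W ∈ unitaryGroup n 𝕜)
    (i : n) :
    ∑ j, ‖W i j‖ ^ 2 = 1 := by
  have h := congrFun₂ (mem_unitaryGroup_iff.mp hW) i i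
  simp only [mul_apply, star_apply, RCLike.star_def, RCLike.mul_conj, one_apply_eq] at h
  exact_mod_cast h

lemma sum_norm_sq_col_eq_one_of_mem_unitaryGroup {W : Matrix n n 𝕜} (hW : W ∈ unitaryGroup n 𝕜)
    (j : n) :
    ∑ i, ‖W i j‖ ^ 2 = 1 := by
  have h := congrFun₂ (mem_unitaryGroup_iff'.mp hW) j j
  simp only [mul_apply, star_apply, RCLike.star_def, mul_comm (starRingEnd 𝕜 _), RCLike.mul_conj,
    one_apply_eq] at h
  exact_mod_cast h

lemma of_norm_sq_mem_doublyStochastic {W : Matrix n n 𝕜} (hW : W ∈ unitaryGroup n 𝕜) :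
    of (fun i j => ‖W i j‖ ^ 2) ∈ doublyStochastic ℝ n :=
  mem_doublyStochastic_iff_sum.mpr ⟨fun _ _ => sq_nonneg _,
    sum_norm_sq_row_eq_one_of_mem_unitaryGroup hW, sum_norm_sq_col_eq_one_of_mem_unitaryGroup hW⟩

lemma exists_perm_dotProduct_mulVec_le_of_mem_doublyStochastic {S : Matrix n n ℝ}
    (hS : S ∈ doublyStochastic ℝ n) (a b : n → ℝ) :
    ∃ π : Equiv.Perm n, a ⬝ᵥ S *ᵥ b ≤ ∑ i, a i * b (π i) := by
  let f : Matrix n n ℝ →ₗ[ℝ] ℝ :=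
    { toFun := fun M => a ⬝ᵥ M *ᵥ b
      map_add' := fun M N => by simp only [add_mulVec, dotProduct_add]
      map_smul' := fun c M => by simp only [smul_mulVec, dotProduct_smul, RingHom.id_apply] }
  rw [← SetLike.mem_coe, doublyStochastic_eq_convexHull_permMatrix] at hS
  obtain ⟨_, ⟨π, rfl⟩, hπ⟩ := (f.convexOn convex_univ).exists_ge_of_mem_convexHull (by simp) hS
  refine ⟨π, hπ.trans_eq ?_⟩
  simp [f, permMatrix_mulVec, dotProduct]

namespace IsHermitian

variable {A B : Matrix n n 𝕜}

lemma trace_mul_eq_trace_diagonal_mul_conj (hA : A.IsHermitian) (hB : B.IsHermitian) :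
    let W : Matrix n n 𝕜 := star hA.eigenvectorUnitary * hB.eigenvectorUnitary
    (A * B).trace = (diagonal (RCLike.ofReal ∘ hA.eigenvalues) * W *
      diagonal (RCLike.ofReal ∘ hB.eigenvalues) * star W).trace := by
  intro W
  conv_lhs => rw [hA.spectral_theorem, hB.spectral_theorem]
  simp only [W, Unitary.conjStarAlgAut_apply, Unitary.coe_star, star_mul, star_star,
    Matrix.mul_assoc]
  rw [trace_mul_comm]
  simp only [Matrix.mul_assoc]

lemma re_trace_mul_self (hA : A.IsHermitian) :
    RCLike.re (A * A).trace = ∑ i, hA.eigenvalues i ^ 2 := by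
  rw [hA.trace_mul_eq_trace_diagonal_mul_conj hA, Unitary.coe_star, Unitary.coe_star_mul_self]
  simp [diagonal_mul_diagonal, trace_diagonal, sq]

lemma exists_perm_re_trace_mul_le (hA : A.IsHermitian) (hB : B.IsHermitian) :
    ∃ π : Equiv.Perm n,
      RCLike.re (A * B).trace ≤ ∑ i, hA.eigenvalues i * hB.eigenvalues (π i) := by
  rw [hA.trace_mul_eq_trace_diagonal_mul_conj hB, re_trace_diagonal_mul_mul_diagonal_mul_star]
  exact exists_perm_dotProduct_mulVec_le_of_mem_doublyStochastic
    (of_norm_sq_mem_doublyStochastic (star hA.eigenvectorUnitary * hB.eigenvectorUnitary).2) _ _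

end IsHermitian

end Matrix

/-- **Hoffman–Wielandt inequality.** For Hermitian `A B : Matrix (Fin n) (Fin n) ℂ`,
if `μA` and `μB` list the eigenvalues of `A` and `B` in decreasing order (with
multiplicity), then `∑ i, (μA i - μB i)^2 ≤ Tr ((A - B)^2)`. -/
theorem hoffman_wielandt {n : ℕ} (A B : Matrix (Fin n) (Fin n) ℂ)
    (hA : A.IsHermitian) (hB : B.IsHermitian)
    (μA μB : Fin n → ℝ) (hμA : Antitone μA) (hμB : Antitone μB)
    (hA' : ∃ σ : Equiv.Perm (Fin n), μA = hA.eigenvalues ∘ σ)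
    (hB' : ∃ τ : Equiv.Perm (Fin n), μB = hB.eigenvalues ∘ τ) :
    ∑ i, (μA i - μB i) ^ 2 ≤ (((A - B) * (A - B)).trace).re := by
  obtain ⟨σ, hσ⟩ := hA'
  obtain ⟨τ, hτ⟩ := hB'
  obtain ⟨π, hπ⟩ := hA.exists_perm_re_trace_mul_le hB
  have hAB : RCLike.re (A * B).trace ≤ ∑ i, μA i * μB i :=
    hπ.trans ((hμA.monovary hμB).sum_mul_comp_perm_le_of_eq_comp hσ hτ π)
  have hAA : RCLike.re (A * A).trace = ∑ i, μA i ^ 2 := by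
    rw [hA.re_trace_mul_self, hσ]
    exact (Equiv.sum_comp σ (hA.eigenvalues · ^ 2)).symm
  have hBB : RCLike.re (B * B).trace = ∑ i, μB i ^ 2 := by
    rw [hB.re_trace_mul_self, hτ]
    exact (Equiv.sum_comp τ (hB.eigenvalues · ^ 2)).symm
  have hexpand : ∑ i, (μA i - μB i) ^ 2
      = ∑ i, μA i ^ 2 - 2 * ∑ i, μA i * μB i + ∑ i, μB i ^ 2 := by
    simp only [sub_sq, Finset.sum_add_distrib, Finset.sum_sub_distrib, Finset.mul_sum, mul_assoc]
  rw [← RCLike.re_to_complex, trace_sub_mul_sub, map_add, map_sub, RCLike.ofNat_mul_re, hAA, hBB,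
    hexpand]
  linarith
end

section
/- Stieltjes continuity theorem: let (μ_n)_n be a sequence of probability measures on ℝ and μ another probability measure on ℝ. Then μ_n converges to μ for the vague topology (i.e. ∫ f dμ_n → ∫ f dμ for every continuous compactly supported f : ℝ → ℝ) if and only if for every z ∈ ℂ with Im z ≠ 0, the Stieltjes transforms converge: W_{μ_n}(z) → W_μ(z) as n → ∞. -/
/-!
Integration against a probability measure is `1`-Lipschitz for the uniform norm, so the bounded
continuous functions whose integrals converge form a closed subspace. If it contains the compactly
supported functions, it contains every function vanishing at infinity, in particular every Cauchy
kernel `x ↦ (z - x)⁻¹`. Conversely, on the one-point compactification of `ℝ` the resolvent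
identity `(z - x)⁻¹ (w - x)⁻¹ = ((z - x)⁻¹ - (w - x)⁻¹) / (w - z)` makes the closed span of the
Cauchy kernels and the constants a star subalgebra. It separates points, so by Stone–Weierstrass
it is all of `C(OnePoint ℝ, ℂ)`; since its generators lie in the closed subspace above, so does
every compactly supported function.
-/

open MeasureTheory Filter Topology BoundedContinuousFunction

section TendstoIntegral

variable {X E ι : Type*} [MeasurableSpace X] [TopologicalSpace X] [OpensMeasurableSpace X]
  [NormedAddCommGroup E] [NormedSpace ℝ E] [SecondCountableTopology E] [MeasurableSpace E]
  [BorelSpace E]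

lemma BoundedContinuousFunction.lipschitzWith_integral (μ : Measure X) [IsProbabilityMeasure μ] :
    LipschitzWith 1 (fun f : X →ᵇ E => ∫ x, f x ∂μ) := by
  refine LipschitzWith.of_dist_le_mul fun f g => ?_
  rw [NNReal.coe_one, one_mul, dist_eq_norm, dist_eq_norm,
    ← integral_sub (f.integrable μ) (g.integrable μ)]
  exact (f - g).norm_integral_le_norm μ

variable (𝕜 : Type*) [NontriviallyNormedField 𝕜] [NormedSpace 𝕜 E] [SMulCommClass ℝ 𝕜 E]

variable (E) in
def tendstoIntegralSubmodule (l : Filter ι) (μs : ι → Measure X) [∀ i, IsFiniteMeasure (μs i)]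
    (μ : Measure X) [IsFiniteMeasure μ] : Submodule 𝕜 (X →ᵇ E) where
  carrier := {f | Tendsto (fun i => ∫ x, f x ∂μs i) l (𝓝 (∫ x, f x ∂μ))}
  add_mem' {f g} hf hg := by
    have integral_add_eq (ν : Measure X) [IsFiniteMeasure ν] :
        ∫ x, (f + g) x ∂ν = ∫ x, f x ∂ν + ∫ x, g x ∂ν :=
      integral_add (f.integrable ν) (g.integrable ν)
    simpa only [Set.mem_ofPred_eq, integral_add_eq] using hf.add hg
  zero_mem' := by simp [tendsto_const_nhds]
  smul_mem' c f hf := by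
    simpa only [Set.mem_ofPred_eq, coe_smul, Pi.smul_apply, integral_smul] using hf.const_smul c

variable (E) in
lemma isClosed_tendstoIntegralSubmodule (l : Filter ι) (μs : ι → Measure X)
    [∀ i, IsProbabilityMeasure (μs i)] (μ : Measure X) [IsProbabilityMeasure μ] :
    IsClosed (tendstoIntegralSubmodule E 𝕜 l μs μ : Set (X →ᵇ E)) :=
  (LipschitzWith.uniformEquicontinuous _ 1 fun i =>
    lipschitzWith_integral (E := E) (μs i)).equicontinuous.isClosed_setOfPred_tendsto
      (lipschitzWith_integral μ).continuous

end TendstoIntegral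

lemma BoundedContinuousFunction.mem_closure_setOf_hasCompactSupport {X E : Type*}
    [TopologicalSpace X] [RegularSpace X] [LocallyCompactSpace X] [NormedAddCommGroup E]
    [NormedSpace ℝ E] (f : X →ᵇ E) (hf : Tendsto f (cocompact X) (𝓝 0)) :
    f ∈ closure {g : X →ᵇ E | HasCompactSupport g} := by
  refine Metric.mem_closure_iff.2 fun ε hε => ?_
  obtain ⟨K, hK, hfK⟩ := (hasBasis_cocompact.tendsto_iff Metric.nhds_basis_ball).1 hf (ε / 2)
    (half_pos hε)
  obtain ⟨χ, hχK, -, hχc, hχ01⟩ :=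
    exists_continuous_one_zero_of_isCompact hK isClosed_empty (Set.disjoint_empty K)
  let χ' : X →ᵇ ℝ := (⟨χ, hχc⟩ : CompactlySupportedContinuousMap X ℝ).toBoundedContinuousFunction
  refine ⟨χ' • f, hχc.smul_right, lt_of_le_of_lt ((dist_le (half_pos hε).le).2 fun x => ?_)
    (half_lt_self hε)⟩
  rw [dist_eq_norm]
  change ‖f x - χ x • f x‖ ≤ ε / 2
  by_cases hx : x ∈ K
  · simpa [hχK hx] using (half_pos hε).le
  have hχx : ‖1 - χ x‖ ≤ 1 := by
    rw [Real.norm_eq_abs, abs_le]; constructor <;> linarith [(hχ01 x).1, (hχ01 x).2]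
  calc ‖f x - χ x • f x‖ = ‖1 - χ x‖ * ‖f x‖ := by rw [← norm_smul, sub_smul, one_smul]
    _ ≤ 1 * ‖f x‖ := by gcongr
    _ ≤ ε / 2 := by simpa using (mem_ball_zero_iff.1 (hfK x hx)).le

section Vague

variable {X ι : Type*} [MeasurableSpace X] [TopologicalSpace X] [OpensMeasurableSpace X]
  {l : Filter ι} {μs : ι → Measure X} [∀ i, IsProbabilityMeasure (μs i)]
  {μ : Measure X} [IsProbabilityMeasure μ]

lemma mem_tendstoIntegralSubmodule_of_hasCompactSupport
    (hvague : ∀ f : X → ℝ, Continuous f → HasCompactSupport f →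
      Tendsto (fun i => ∫ x, f x ∂μs i) l (𝓝 (∫ x, f x ∂μ)))
    (g : X →ᵇ ℂ) (hg : HasCompactSupport g) : g ∈ tendstoIntegralSubmodule ℂ ℂ l μs μ := by
  have hre := hvague (fun x => (g x).re) (by fun_prop) (hg.comp_left Complex.zero_re)
  have him := hvague (fun x => (g x).im) (by fun_prop) (hg.comp_left Complex.zero_im)
  change Tendsto (fun i => ∫ x, g x ∂μs i) l (𝓝 (∫ x, g x ∂μ))
  simp_rw [← integral_re_add_im (g.integrable _)]
  exact hre.ofReal.add (him.ofReal.mul_const _)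

theorem tendsto_integral_of_tendsto_cocompact [RegularSpace X] [LocallyCompactSpace X]
    (hvague : ∀ f : X → ℝ, Continuous f → HasCompactSupport f →
      Tendsto (fun i => ∫ x, f x ∂μs i) l (𝓝 (∫ x, f x ∂μ)))
    (f : X →ᵇ ℂ) (hf : Tendsto f (cocompact X) (𝓝 0)) :
    Tendsto (fun i => ∫ x, f x ∂μs i) l (𝓝 (∫ x, f x ∂μ)) :=
  closure_minimal (fun g hg => mem_tendstoIntegralSubmodule_of_hasCompactSupport hvague g hg)
    (isClosed_tendstoIntegralSubmodule ℂ ℂ l μs μ) (f.mem_closure_setOf_hasCompactSupport hf)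

end Vague

namespace OnePoint

variable {X E : Type*} [TopologicalSpace X] [NormedAddCommGroup E]

variable (𝕜 : Type*) [NormedField 𝕜] [NormedSpace 𝕜 E] in
noncomputable def compCoeCLM : C(OnePoint X, E) →L[𝕜] X →ᵇ E :=
  (compContinuousCLM E 𝕜 ⟨((↑) : X → OnePoint X), continuous_coe⟩).comp
    (ContinuousMap.linearIsometryBoundedOfCompact (OnePoint X) E 𝕜 :
      C(OnePoint X, E) →L[𝕜] OnePoint X →ᵇ E)

variable {𝕜 : Type*} [NormedField 𝕜] [NormedSpace 𝕜 E]

lemma tendsto_compCoeCLM_cocompact [R1Space X] (F : C(OnePoint X, E)) :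
    Tendsto (compCoeCLM 𝕜 F) (cocompact X) (𝓝 (F ∞)) := by
  rw [← coclosedCompact_eq_cocompact]
  exact ((continuous_iff F).1 F.continuous).1

end OnePoint

open OnePoint

lemma sub_ofReal_ne_zero {z : ℂ} (hz : z.im ≠ 0) (x : ℝ) : z - x ≠ 0 :=
  fun h => hz (by simpa using congrArg Complex.im h)

noncomputable def cauchyKernel (z : ℂ) (hz : z.im ≠ 0) : C(OnePoint ℝ, ℂ) :=
  continuousMapMk ⟨fun x : ℝ => (z - x)⁻¹, by fun_prop (disch := exact sub_ofReal_ne_zero hz)⟩ 0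
    (by
      rw [coclosedCompact_eq_cocompact, ← Metric.cobounded_eq_cocompact]
      exact tendsto_inv₀_cobounded.comp ((tendsto_const_sub_cobounded z).comp
        (RCLike.tendsto_ofReal_cobounded_cobounded ℂ)))

section CauchyKernel

variable {z w : ℂ} (hz : z.im ≠ 0) (hw : w.im ≠ 0)

@[simp] lemma cauchyKernel_coe (x : ℝ) : cauchyKernel z hz x = (z - x)⁻¹ := rfl

@[simp] lemma cauchyKernel_infty : cauchyKernel z hz ∞ = 0 := rfl

lemma norm_cauchyKernel_le : ‖cauchyKernel z hz‖ ≤ |z.im|⁻¹ := by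
  refine (ContinuousMap.norm_le _ (by positivity)).2 fun p => ?_
  induction p using OnePoint.rec with
  | infty => simp
  | coe x =>
    rw [cauchyKernel_coe, norm_inv]
    gcongr
    simpa using Complex.abs_im_le_norm (z - x)

lemma cauchyKernel_mul_cauchyKernel (hzw : z ≠ w) :
    cauchyKernel z hz * cauchyKernel w hw =
      (w - z)⁻¹ • (cauchyKernel z hz - cauchyKernel w hw) := by
  have hwz : w - z ≠ 0 := sub_ne_zero.2 hzw.symm
  ext p
  induction p using OnePoint.rec with
  | infty => simp
  | coe x =>
    have := sub_ofReal_ne_zero hz x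
    have := sub_ofReal_ne_zero hw x
    simp only [ContinuousMap.mul_apply, ContinuousMap.smul_apply, ContinuousMap.sub_apply,
      cauchyKernel_coe, smul_eq_mul]
    field_simp
    ring

lemma star_cauchyKernel :
    star (cauchyKernel z hz) = cauchyKernel (starRingEnd ℂ z) (by simpa using hz) := by
  ext p
  induction p using OnePoint.rec <;> simp

lemma norm_cauchyKernel_sub_le :
    ‖cauchyKernel z hz - cauchyKernel w hw‖ ≤ ‖w - z‖ * (|z.im|⁻¹ * |w.im|⁻¹) := by
  rcases eq_or_ne z w with rfl | hzw
  · simp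
  calc ‖cauchyKernel z hz - cauchyKernel w hw‖
      = ‖(w - z) • (cauchyKernel z hz * cauchyKernel w hw)‖ := by
        rw [cauchyKernel_mul_cauchyKernel hz hw hzw, smul_inv_smul₀ (sub_ne_zero.2 hzw.symm)]
    _ ≤ ‖w - z‖ * (‖cauchyKernel z hz‖ * ‖cauchyKernel w hw‖) := by
        rw [norm_smul]; gcongr; exact norm_mul_le _ _
    _ ≤ ‖w - z‖ * (|z.im|⁻¹ * |w.im|⁻¹) := by
        gcongr
        exacts [norm_cauchyKernel_le hz, norm_cauchyKernel_le hw]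

lemma tendsto_cauchyKernel {α : Type*} {l : Filter α} {w : α → ℂ} (hw : ∀ a, (w a).im ≠ 0)
    (hwz : Tendsto w l (𝓝 z)) :
    Tendsto (fun a => cauchyKernel (w a) (hw a)) l (𝓝 (cauchyKernel z hz)) := by
  rw [tendsto_iff_norm_sub_tendsto_zero]
  refine squeeze_zero (fun _ => norm_nonneg _) (fun a => norm_cauchyKernel_sub_le (hw a) hz) ?_
  have hcont : ContinuousAt (fun u : ℂ => ‖z - u‖ * (|u.im|⁻¹ * |z.im|⁻¹)) z :=
    (by fun_prop : ContinuousAt (fun u : ℂ => ‖z - u‖) z).mul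
      (((continuous_abs.comp Complex.continuous_im).continuousAt.inv₀ (by simpa using hz)).mul
        continuousAt_const)
  simpa [Function.comp_def] using hcont.tendsto.comp hwz

lemma cauchyKernel_injective : Function.Injective (cauchyKernel z hz) := by
  intro p q hpq
  induction p using OnePoint.rec <;> induction q using OnePoint.rec <;>
    simp_all [eq_comm, sub_ofReal_ne_zero hz]

end CauchyKernel

lemma Submodule.mul_mem_topologicalClosure_span {R A : Type*} [CommSemiring R] [Semiring A]
    [Algebra R A] [TopologicalSpace A] [ContinuousMul A] [ContinuousAdd A]
    [ContinuousConstSMul R A] {s : Set A}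
    (hs : ∀ a ∈ s, ∀ b ∈ s, a * b ∈ (span R s).topologicalClosure) {a b : A}
    (ha : a ∈ (span R s).topologicalClosure) (hb : b ∈ (span R s).topologicalClosure) :
    a * b ∈ (span R s).topologicalClosure := by
  have hspan : span R s * span R s ≤ (span R s).topologicalClosure := by
    rw [span_mul_span]
    exact span_le.2 fun _ ⟨a, ha, b, hb, hab⟩ => hab ▸ hs a ha b hb
  rw [← SetLike.mem_coe, topologicalClosure_coe] at ha hb
  have := map_mem_closure₂ continuous_mul ha hb fun a ha b hb => hspan (mul_mem_mul ha hb)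
  rwa [(span R s).isClosed_topologicalClosure.closure_eq] at this

def cauchyKernels : Set C(OnePoint ℝ, ℂ) := {F | ∃ z hz, cauchyKernel z hz = F}

lemma cauchyKernel_mem_cauchyKernels (z : ℂ) (hz : z.im ≠ 0) :
    cauchyKernel z hz ∈ cauchyKernels :=
  ⟨z, hz, rfl⟩

noncomputable abbrev cauchyKernelSpan : Submodule ℂ C(OnePoint ℝ, ℂ) :=
  Submodule.span ℂ (insert 1 cauchyKernels)

lemma cauchyKernel_mul_mem_topologicalClosure {z w : ℂ} (hz : z.im ≠ 0) (hw : w.im ≠ 0) :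
    cauchyKernel z hz * cauchyKernel w hw ∈ cauchyKernelSpan.topologicalClosure := by
  have hmem {w : ℂ} (hw : w.im ≠ 0) (hzw : z ≠ w) :
      cauchyKernel z hz * cauchyKernel w hw ∈ cauchyKernelSpan := by
    rw [cauchyKernel_mul_cauchyKernel hz hw hzw]
    exact Submodule.smul_mem _ _ <| sub_mem
      (Submodule.subset_span (Or.inr (cauchyKernel_mem_cauchyKernels z hz)))
      (Submodule.subset_span (Or.inr (cauchyKernel_mem_cauchyKernels w hw)))
  rcases ne_or_eq z w with hzw | rfl
  · exact Submodule.le_topologicalClosure _ (hmem hw hzw)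
  -- the square is the limit, as `t → 0`, of the products with the kernel at `(1 + t²) z`
  let v : ℝ → ℂ := fun t => ((1 + t ^ 2 : ℝ) : ℂ) * z
  have hv t : (v t).im ≠ 0 := by simp only [v, Complex.im_ofReal_mul]; positivity
  have hvz : Tendsto v (𝓝[≠] 0) (𝓝 z) :=
    (Continuous.tendsto' (by fun_prop) 0 z (by simp [v])).mono_left nhdsWithin_le_nhds
  rw [← SetLike.mem_coe, Submodule.topologicalClosure_coe]
  refine mem_closure_of_tendsto (tendsto_const_nhds.mul (tendsto_cauchyKernel hz hv hvz)) ?_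
  filter_upwards [self_mem_nhdsWithin] with t ht
  refine hmem (hv t) fun h => ht ?_
  have hz0 : z ≠ 0 := fun h0 => hz (by simp [h0])
  have : ((1 + t ^ 2 : ℝ) : ℂ) = 1 := by
    simpa [v, hz0] using (mul_left_eq_self₀.1 h.symm)
  simpa using this

lemma topologicalClosure_cauchyKernelSpan : cauchyKernelSpan.topologicalClosure = ⊤ := by
  let A := StarAlgebra.adjoin ℂ cauchyKernels
  have hI : Complex.I.im ≠ 0 := by simp
  have hsep : A.SeparatesPoints := fun p q hpq =>
    ⟨_, ⟨cauchyKernel Complex.I hI, StarAlgebra.subset_adjoin ℂ _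
      (cauchyKernel_mem_cauchyKernels _ hI), rfl⟩, fun h => hpq (cauchyKernel_injective hI h)⟩
  have hA : (A : Set C(OnePoint ℝ, ℂ)) ⊆ cauchyKernelSpan.topologicalClosure := by
    intro F hF
    rw [SetLike.mem_coe, ← StarSubalgebra.mem_toSubalgebra, StarAlgebra.adjoin_toSubalgebra] at hF
    induction hF using Algebra.adjoin_induction with
    | mem F hF =>
      refine Submodule.le_topologicalClosure _ (Submodule.subset_span (Or.inr ?_))
      rcases hF with ⟨z, hz, rfl⟩ | ⟨z, hz, hF⟩
      · exact cauchyKernel_mem_cauchyKernels z hz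
      · rw [← star_star F, ← hF, star_cauchyKernel]
        exact cauchyKernel_mem_cauchyKernels _ _
    | algebraMap r =>
      rw [Algebra.algebraMap_eq_smul_one]
      exact Submodule.le_topologicalClosure _
        (Submodule.smul_mem _ _ (Submodule.subset_span (Set.mem_insert _ _)))
    | add F G _ _ hF hG => exact add_mem hF hG
    | mul F G _ _ hF hG =>
      refine Submodule.mul_mem_topologicalClosure_span ?_ hF hG
      rintro a ha b (rfl | ⟨w, hw, rfl⟩)
      · rw [mul_one]
        exact Submodule.le_topologicalClosure _ (Submodule.subset_span ha)
      rcases ha with rfl | ⟨z, hz, rfl⟩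
      · rw [one_mul]
        exact Submodule.le_topologicalClosure _
          (Submodule.subset_span (Or.inr (cauchyKernel_mem_cauchyKernels w hw)))
      · exact cauchyKernel_mul_mem_topologicalClosure hz hw
  refine eq_top_iff.2 fun F _ => closure_minimal hA
    (Submodule.isClosed_topologicalClosure _) ?_
  rw [← StarSubalgebra.topologicalClosure_coe,
    ContinuousMap.starSubalgebra_topologicalClosure_eq_top_of_separatesPoints A hsep]
  trivial

theorem compCoeCLM_mem_tendstoIntegralSubmodule {ι : Type*} {l : Filter ι}
    {μs : ι → Measure ℝ} [∀ i, IsProbabilityMeasure (μs i)] {μ : Measure ℝ}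
    [IsProbabilityMeasure μ]
    (hstieltjes : ∀ z : ℂ, z.im ≠ 0 →
      Tendsto (fun i => ∫ x : ℝ, (z - (x : ℂ))⁻¹ ∂μs i) l (𝓝 (∫ x : ℝ, (z - (x : ℂ))⁻¹ ∂μ)))
    (F : C(OnePoint ℝ, ℂ)) : compCoeCLM ℂ F ∈ tendstoIntegralSubmodule ℂ ℂ l μs μ := by
  let T := (tendstoIntegralSubmodule ℂ ℂ l μs μ).comap (compCoeCLM ℂ).toLinearMap
  have hgen : insert 1 cauchyKernels ⊆ T := by
    rintro _ (rfl | ⟨z, hz, rfl⟩)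
    · change Tendsto (fun i => ∫ _ : ℝ, (1 : ℂ) ∂μs i) l (𝓝 (∫ _ : ℝ, (1 : ℂ) ∂μ))
      simpa using tendsto_const_nhds
    · exact hstieltjes z hz
  have hle : cauchyKernelSpan.topologicalClosure ≤ T :=
    Submodule.topologicalClosure_minimal _ (Submodule.span_le.2 hgen)
    ((isClosed_tendstoIntegralSubmodule ℂ ℂ l μs μ).preimage (compCoeCLM ℂ).continuous)
  exact hle (topologicalClosure_cauchyKernelSpan ▸ Submodule.mem_top)

/-- **Stieltjes continuity theorem.**  A sequence of probability measures `μₙ` on `ℝ`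
converges vaguely to a probability measure `μ` (i.e. against every continuous compactly
supported function) if and only if for every `z ∈ ℂ` with `Im z ≠ 0` the Stieltjes
transforms `W_{μₙ}(z) = ∫ (z - x)⁻¹ dμₙ(x)` converge to `W_μ(z)`. -/
theorem stieltjes_continuity (μn : ℕ → Measure ℝ) (μ : Measure ℝ)
    [∀ n, IsProbabilityMeasure (μn n)] [IsProbabilityMeasure μ] :
    (∀ f : ℝ → ℝ, Continuous f → HasCompactSupport f →
      Tendsto (fun n => ∫ x, f x ∂(μn n)) atTop (nhds (∫ x, f x ∂μ)))
    ↔ (∀ z : ℂ, z.im ≠ 0 →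
      Tendsto (fun n => ∫ x : ℝ, (z - (x : ℂ))⁻¹ ∂(μn n)) atTop
        (nhds (∫ x : ℝ, (z - (x : ℂ))⁻¹ ∂μ))) := by
  refine ⟨fun hvague z hz => ?_, fun hstieltjes f hf hfc => ?_⟩
  · exact tendsto_integral_of_tendsto_cocompact hvague (compCoeCLM ℂ (cauchyKernel z hz))
      (tendsto_compCoeCLM_cocompact _)
  · let F : C(OnePoint ℝ, ℂ) := continuousMapMk ⟨fun x => (f x : ℂ), by fun_prop⟩ 0
      (by simpa [coclosedCompact_eq_cocompact] using hfc.is_zero_at_infty.ofReal)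
    have hF := compCoeCLM_mem_tendstoIntegralSubmodule hstieltjes F
    change Tendsto (fun n => ∫ x, (f x : ℂ) ∂μn n) atTop (𝓝 (∫ x, (f x : ℂ) ∂μ)) at hF
    simpa only [integral_complex_ofReal, tendsto_ofReal_iff] using hF
end

section
/- Stieltjes inversion by Cauchy smoothing: let μ be a probability measure on ℝ and let C_η denote the Cauchy distribution of width η > 0, with density η/(π(x² + η²)). Then for every bounded continuous f : ℝ → ℝ, lim_{η→0⁺} ∫_ℝ f d(μ ⋆ C_η) = ∫_ℝ f dμ, where μ ⋆ C_η is the convolution, whose density at y equals ∫_ℝ (η/π)·dμ(x)/((y − x)² + η²) = −(1/π) Im W_μ(y + iη). -/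
/-!
The kernel `y ↦ (η/π)/((y - x)² + η²)` is the Cauchy density with location `x` and scale `η`,
so `μ ⋆ C_η` is the law of `X + η T` with `X ∼ μ` and `T ∼ C_1` independent: by Fubini and the
substitution `y = x + η t`, `∫ f d(μ ⋆ C_η) = ∫ f (x + η t) d(μ ⊗ C_1)`. As `η → 0` the integrand
tends to `f x` pointwise and is bounded, so dominated convergence on the probability space
`μ ⊗ C_1` gives the limit `∫ f dμ`.
-/

open MeasureTheory Filter ProbabilityTheory Topology
open scoped NNReal Real

namespace ProbabilityTheory

lemma cauchyPDFReal_toNNReal {η : ℝ} (hη : 0 ≤ η) (x y : ℝ) :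
    cauchyPDFReal x η.toNNReal y = η / π / ((y - x) ^ 2 + η ^ 2) := by
  rw [cauchyPDFReal_def, Real.coe_toNNReal _ hη]
  ring

lemma cauchyPDFReal_add_mul (x₀ : ℝ) {γ : ℝ≥0} (hγ : γ ≠ 0) (t : ℝ) :
    cauchyPDFReal x₀ γ (x₀ + γ * t) = (γ : ℝ)⁻¹ * cauchyPDFReal 0 1 t := by
  have hγ' : (γ : ℝ) ≠ 0 := by exact_mod_cast hγ
  simp only [cauchyPDFReal_def, NNReal.coe_one, sub_zero, add_sub_cancel_left]
  field_simp

lemma integral_cauchyMeasure (g : ℝ → ℝ) (x₀ : ℝ) {γ : ℝ≥0} (hγ : γ ≠ 0) :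
    ∫ t, g t ∂cauchyMeasure x₀ γ = ∫ t, g t * cauchyPDFReal x₀ γ t := by
  rw [cauchyMeasure_of_scale_ne_zero x₀ hγ,
    integral_withDensity_eq_integral_toReal_smul (measurable_cauchyPDF x₀ γ)
      (ae_of_all _ fun _ => ENNReal.ofReal_lt_top)]
  refine integral_congr_ae (ae_of_all _ fun t => ?_)
  simp [cauchyPDF, ENNReal.toReal_ofReal (cauchyPDF_pos x₀ hγ t).le, mul_comm]

lemma integral_mul_cauchyPDFReal (g : ℝ → ℝ) (x₀ : ℝ) {γ : ℝ≥0} (hγ : γ ≠ 0) :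
    ∫ y, g y * cauchyPDFReal x₀ γ y = ∫ t, g (x₀ + γ * t) ∂cauchyMeasure 0 1 := by
  have hγ' : (0 : ℝ) < γ := by positivity
  set G := fun y => g y * cauchyPDFReal x₀ γ y
  calc ∫ y, G y = ∫ u, G (x₀ + u) := (integral_add_left_eq_self G x₀).symm
    _ = γ * ∫ t, G (x₀ + γ * t) := by
      rw [Measure.integral_comp_mul_left (fun u => G (x₀ + u)), abs_of_pos (inv_pos.2 hγ'),
        smul_eq_mul, mul_inv_cancel_left₀ hγ'.ne']
    _ = ∫ t, g (x₀ + γ * t) * cauchyPDFReal 0 1 t := by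
      rw [← integral_const_mul]
      congr with t
      simp only [G, cauchyPDFReal_add_mul x₀ hγ]
      field_simp
    _ = _ := (integral_cauchyMeasure _ 0 one_ne_zero).symm

lemma integrable_cauchyPDFReal_prod (μ : Measure ℝ) [IsFiniteMeasure μ] (γ : ℝ≥0) :
    Integrable (fun p : ℝ × ℝ => cauchyPDFReal p.2 γ p.1) (volume.prod μ) := by
  rw [integrable_prod_iff' (by unfold cauchyPDFReal; fun_prop)]
  refine ⟨ae_of_all _ fun x => integrable_cauchyPDFReal x, ?_⟩
  have htrans : ∀ x, ∫ y, ‖cauchyPDFReal x γ y‖ = ∫ y, ‖cauchyPDFReal 0 γ y‖ := fun x => by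
    simpa [cauchyPDFReal_def] using integral_sub_right_eq_self (fun y => ‖cauchyPDFReal 0 γ y‖) x
  simp only [htrans]
  exact integrable_const _

lemma integral_mul_integral_cauchyPDFReal (μ : Measure ℝ) [IsFiniteMeasure μ] {f : ℝ → ℝ}
    (hf : Measurable f) {C : ℝ} (hC : ∀ x, |f x| ≤ C) {γ : ℝ≥0} (hγ : γ ≠ 0) :
    ∫ y, f y * ∫ x, cauchyPDFReal x γ y ∂μ
      = ∫ p, f (p.1 + γ * p.2) ∂(μ.prod (cauchyMeasure 0 1)) := by
  have hint : Integrable (Function.uncurry fun y x => f y * cauchyPDFReal x γ y) (volume.prod μ) :=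
    (integrable_cauchyPDFReal_prod μ γ).bdd_mul (hf.comp measurable_fst).aestronglyMeasurable
      (ae_of_all _ fun p => hC p.1)
  have hmeas : Measurable fun p : ℝ × ℝ => f (p.1 + γ * p.2) := hf.comp (by fun_prop)
  calc ∫ y, f y * ∫ x, cauchyPDFReal x γ y ∂μ = ∫ y, ∫ x, f y * cauchyPDFReal x γ y ∂μ := by
        simp only [integral_const_mul]
    _ = ∫ x, (∫ y, f y * cauchyPDFReal x γ y) ∂μ := integral_integral_swap hint
    _ = ∫ x, (∫ t, f (x + γ * t) ∂cauchyMeasure 0 1) ∂μ := by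
        simp only [integral_mul_cauchyPDFReal f _ hγ]
    _ = _ := (integral_prod _ ((integrable_const C).mono' hmeas.aestronglyMeasurable
        (ae_of_all _ fun p => hC _))).symm

end ProbabilityTheory

lemma tendsto_integral_comp_add_mul (ρ : Measure (ℝ × ℝ)) [IsFiniteMeasure ρ] {f : ℝ → ℝ}
    (hf : Continuous f) {C : ℝ} (hC : ∀ x, |f x| ≤ C) :
    Tendsto (fun η => ∫ p, f (p.1 + η * p.2) ∂ρ) (𝓝 0) (𝓝 (∫ p, f p.1 ∂ρ)) := by
  refine tendsto_integral_filter_of_dominated_convergence (fun _ => C)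
    (Eventually.of_forall fun _ => (hf.comp (by fun_prop)).aestronglyMeasurable)
    (Eventually.of_forall fun _ => ae_of_all _ fun p => hC _) (integrable_const C)
    (ae_of_all _ fun p => ?_)
  have hmove : Tendsto (fun η : ℝ => p.1 + η * p.2) (𝓝 0) (𝓝 p.1) :=
    (continuous_const.add (continuous_id.mul continuous_const)).tendsto' 0 _ (by simp)
  exact (hf.tendsto p.1).comp hmove

/-- **Stieltjes inversion by Cauchy smoothing.**  Let `μ` be a probability measure on
`ℝ` and let `μ ⋆ C_η` be its convolution with the Cauchy distribution of width `η > 0`,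
whose density at `y` is `∫ (η/π)/((y-x)² + η²) dμ(x)`.  Then for every bounded
continuous `f : ℝ → ℝ`, `∫ f d(μ ⋆ C_η) → ∫ f dμ` as `η → 0⁺`. -/
theorem stieltjes_inversion_cauchy_smoothing
    (μ : Measure ℝ) [IsProbabilityMeasure μ]
    (f : ℝ → ℝ) (hf : Continuous f) (hfb : ∃ C, ∀ x, |f x| ≤ C) :
    Tendsto (fun η : ℝ =>
        ∫ y : ℝ, f y * ∫ x : ℝ, (η / Real.pi) / ((y - x) ^ 2 + η ^ 2) ∂μ)
      (nhdsWithin 0 (Set.Ioi 0)) (nhds (∫ x, f x ∂μ)) := by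
  obtain ⟨C, hC⟩ := hfb
  have hlim := (tendsto_integral_comp_add_mul (μ.prod (cauchyMeasure 0 1)) hf hC).mono_left
    (nhdsWithin_le_nhds (s := Set.Ioi 0))
  rw [integral_fun_fst, probReal_univ, one_smul] at hlim
  refine hlim.congr' (eventually_nhdsWithin_of_forall fun η (hη : 0 < η) => ?_)
  simp only [← cauchyPDFReal_toNNReal hη.le]
  rw [integral_mul_integral_cauchyPDFReal μ hf.measurable hC (by simpa using hη),
    Real.coe_toNNReal _ hη.le]
end

section
/- Andréief-type identity for the partition function: let w : ℝ → [0, ∞) be a measurable weight function such that ∫ |x|^k w(x) dx < ∞ for all k ≥ 0, and let (Q_m)_{m ≥ 0} be any sequence of monic real polynomials with deg Q_m = m. Then for every n ≥ 1, ∫_{ℝ^n} ∏_{1 ≤ i < j ≤ n} (λ_j − λ_i)² ∏_{i=1}^n w(λ_i) dλ_i = n! · det_{1 ≤ i,j ≤ n} [ ∫_ℝ Q_{i−1}(x) Q_{j−1}(x) w(x) dx ]. -/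
/-!
Since the `Q m` are monic with `deg Q m = m`, column operations turn the Vandermonde matrix
into `[Q_{j}(λ_i)]`, so the integrand is `det [Q_j(λ_i)] · det [Q_j(λ_i) w(λ_i)]`. Expanding
both determinants over permutations `σ, τ`, each term is a product of one-variable functions,
which Fubini integrates to `sgn σ sgn τ ∏ᵢ G (σ i) (τ i)`, with `G` the Gram matrix on the
right. For fixed `σ` the sum over `τ` is `sgn σ · det (G with rows permuted by σ) = det G`,
and there are `n!` choices of `σ`.
-/

open MeasureTheory Finset Equiv

namespace Matrix

variable {ι α R : Type*} [Fintype ι] [DecidableEq ι] [CommRing R]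

theorem sum_sign_mul_prod_apply_perm (M : Matrix ι ι R) (σ : Perm ι) :
    ∑ τ : Perm ι, (Perm.sign τ : R) * ∏ i, M (σ i) (τ i) = Perm.sign σ * M.det := by
  rw [← det_permute, ← det_transpose, det_apply']
  rfl

theorem sum_sign_mul_sign_mul_prod_apply_perm (M : Matrix ι ι R) :
    ∑ σ : Perm ι, ∑ τ : Perm ι, (Perm.sign σ : R) * Perm.sign τ * ∏ i, M (σ i) (τ i)
      = (Fintype.card ι).factorial * M.det := by
  have hσ (σ : Perm ι) :
      ∑ τ : Perm ι, (Perm.sign σ : R) * Perm.sign τ * ∏ i, M (σ i) (τ i) = M.det := by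
    simp_rw [mul_assoc, ← mul_sum, sum_sign_mul_prod_apply_perm]
    simp [← mul_assoc, ← Int.cast_mul]
  simp_rw [hσ, sum_const, card_univ, Fintype.card_perm, nsmul_eq_mul]

theorem det_mul_det_eq_sum_sign_mul_sign (f g : ι → α → R) (x : ι → α) :
    det (of fun i j => f j (x i)) * det (of fun i j => g j (x i))
      = ∑ σ : Perm ι, ∑ τ : Perm ι, (Perm.sign σ : R) * Perm.sign τ *
          ∏ i, f (σ i) (x i) * g (τ i) (x i) := by
  rw [← det_transpose, det_apply', ← det_transpose, det_apply', sum_mul_sum]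
  refine sum_congr rfl fun σ _ => sum_congr rfl fun τ _ => ?_
  simp only [transpose_apply, of_apply, prod_mul_distrib]
  ring

end Matrix

open Matrix

theorem integral_det_mul_det {ι α 𝕜 : Type*} [Fintype ι] [DecidableEq ι] [MeasurableSpace α]
    [RCLike 𝕜] (μ : Measure α) [SigmaFinite μ] (f g : ι → α → 𝕜)
    (hfg : ∀ i j, Integrable (fun y => f i y * g j y) μ) :
    ∫ x, det (of fun i j => f j (x i)) * det (of fun i j => g j (x i)) ∂(Measure.pi fun _ => μ)
      = ((Fintype.card ι).factorial : 𝕜) * det (of fun i j => ∫ y, f i y * g j y ∂μ) := by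
  have hprod (σ τ : Perm ι) : Integrable (fun x : ι → α => ∏ i, f (σ i) (x i) * g (τ i) (x i))
      (Measure.pi fun _ => μ) :=
    Integrable.fintype_prod (f := fun i y => f (σ i) y * g (τ i) y) fun i => hfg _ _
  have hfubini (σ τ : Perm ι) :
      ∫ x, ∏ i, f (σ i) (x i) * g (τ i) (x i) ∂(Measure.pi fun _ => μ)
        = ∏ i, ∫ y, f (σ i) y * g (τ i) y ∂μ :=
    integral_fintype_prod_eq_prod (fun i y => f (σ i) y * g (τ i) y)
  simp_rw [det_mul_det_eq_sum_sign_mul_sign]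
  rw [← sum_sign_mul_sign_mul_prod_apply_perm,
    integral_finsetSum _ fun σ _ => integrable_finsetSum _ fun τ _ => (hprod σ τ).const_mul _]
  refine sum_congr rfl fun σ _ => ?_
  rw [integral_finsetSum _ fun τ _ => (hprod σ τ).const_mul _]
  refine sum_congr rfl fun τ _ => ?_
  rw [integral_const_mul, hfubini]
  rfl

theorem Polynomial.integrable_eval_mul {μ : Measure ℝ} {w : ℝ → ℝ}
    (hw : ∀ k : ℕ, Integrable (fun x => |x| ^ k * w x) μ) (p : Polynomial ℝ) :
    Integrable (fun x => p.eval x * w x) μ := by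
  have hw_meas : AEStronglyMeasurable w μ := by simpa using (hw 0).aestronglyMeasurable
  have hmonomial (k : ℕ) : Integrable (fun x => x ^ k * w x) μ :=
    (hw k).mono ((continuous_pow k).aestronglyMeasurable.mul hw_meas) <|
      .of_forall fun x => by simp
  simp_rw [Polynomial.eval_eq_sum_range, sum_mul, mul_assoc]
  exact integrable_finsetSum _ fun k _ => (hmonomial k).const_mul _

theorem prod_Ioi_sub_sq_mul_prod_eq_det_mul_det {R : Type*} [CommRing R] {n : ℕ}
    (p : Fin n → Polynomial R) (h_deg : ∀ i, (p i).natDegree = i) (h_monic : ∀ i, (p i).Monic)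
    (w : R → R) (x : Fin n → R) :
    (∏ i, ∏ j ∈ Ioi i, (x j - x i) ^ 2) * ∏ i, w (x i)
      = det (of fun i j => (p j).eval (x i)) * det (of fun i j => (p j).eval (x i) * w (x i)) := by
  have hvdm : ∏ i, ∏ j ∈ Ioi i, (x j - x i) = det (of fun i j => (p j).eval (x i)) :=
    (det_vandermonde x).symm.trans
      (det_eval_matrixOfPolynomials_eq_det_vandermonde x p h_deg h_monic)
  have hweight : det (of fun i j => (p j).eval (x i) * w (x i))
      = (∏ i, w (x i)) * det (of fun i j => (p j).eval (x i)) := by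
    rw [← det_mul_column]
    simp_rw [of_apply, mul_comm]
  rw [hweight, ← hvdm]
  simp_rw [prod_pow]
  ring

theorem andreief_partition_function_general (w : ℝ → ℝ)
    (hw_mom : ∀ k : ℕ, Integrable (fun x => |x| ^ k * w x))
    (Q : ℕ → Polynomial ℝ) (hQ : ∀ m, (Q m).Monic) (hQdeg : ∀ m, (Q m).natDegree = m)
    (n : ℕ) :
    (∫ lam : Fin n → ℝ,
        (∏ i : Fin n, ∏ j ∈ Finset.Ioi i, (lam j - lam i) ^ 2) * ∏ i, w (lam i))
      = (n.factorial : ℝ) * Matrix.det (Matrix.of fun i j : Fin n =>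
          ∫ x : ℝ, (Q (i : ℕ)).eval x * (Q (j : ℕ)).eval x * w x) := by
  have hQQ (i j : Fin n) : Integrable (fun x => (Q i).eval x * ((Q j).eval x * w x)) := by
    simpa [mul_assoc] using (Q i * Q j).integrable_eval_mul hw_mom
  simp_rw [prod_Ioi_sub_sq_mul_prod_eq_det_mul_det (fun j : Fin n => Q j) (fun i => hQdeg i)
    (fun i => hQ i), volume_pi, integral_det_mul_det _ _ _ hQQ, Fintype.card_fin, mul_assoc]

/-- **Andréief-type identity for the partition function.**  Let `w : ℝ → [0,∞)` be a
measurable weight with all moments finite, and `Q m` monic real polynomials of degree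
`m`.  Then
`∫_{ℝⁿ} ∏_{i<j} (λ_j - λ_i)² ∏ᵢ w(λᵢ) dλ = n! det [∫ Q_{i-1}(x) Q_{j-1}(x) w(x) dx]`. -/
theorem andreief_partition_function (w : ℝ → ℝ)
    (hw_meas : Measurable w) (hw_nonneg : ∀ x, 0 ≤ w x)
    (hw_mom : ∀ k : ℕ, Integrable (fun x => |x| ^ k * w x))
    (Q : ℕ → Polynomial ℝ) (hQ : ∀ m, (Q m).Monic) (hQdeg : ∀ m, (Q m).natDegree = m)
    (n : ℕ) (hn : 1 ≤ n) :
    (∫ lam : Fin n → ℝ,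
        (∏ i : Fin n, ∏ j ∈ Finset.Ioi i, (lam j - lam i) ^ 2) * ∏ i, w (lam i))
      = (n.factorial : ℝ) * Matrix.det (Matrix.of fun i j : Fin n =>
          ∫ x : ℝ, (Q (i : ℕ)).eval x * (Q (j : ℕ)).eval x * w x) :=
  andreief_partition_function_general w hw_mom Q hQ hQdeg n
end

section
/- Heine's formula for the partition function: let w : ℝ → [0, ∞) be a measurable weight with all moments finite, and suppose (P_m)_{m ≥ 0} is a sequence of monic real polynomials with deg P_m = m satisfying the orthogonality relations ∫_ℝ P_m(x) P_k(x) w(x) dx = δ_{mk} h_m with h_m > 0 for all m, k ≥ 0. Then for every n ≥ 1, Z_n := ∫_{ℝ^n} ∏_{1 ≤ i < j ≤ n} (λ_j − λ_i)² ∏_{i=1}^n w(λ_i) dλ_i = n! ∏_{m=0}^{n−1} h_m. -/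
/-!
Column operations reduce the monic `P_j` to the monomials, so the Vandermonde determinant is
`det [P_j(λ_i)]`, and the integrand is `det [P_j(λ_i)] · det [w(λ_i) P_j(λ_i)]`. Andréief's
identity turns the integral of such a product of determinants into `n!` times the determinant of
the Gram matrix `(∫ P_i P_j w)_{ij}`, which is `diag (h_0, …, h_{n-1})` by orthogonality.
-/

open MeasureTheory Equiv Matrix Polynomial

namespace Matrix

variable {ι R : Type*} [Fintype ι] [DecidableEq ι] [CommRing R]

theorem det_mul_det_eq_sum_sum_perm (A B : Matrix ι ι R) :
    A.det * B.det = ∑ σ : Perm ι, ∑ τ : Perm ι,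
      ((Perm.sign σ : ℤ) : R) * (Perm.sign τ : ℤ) * ∏ i, A i (σ i) * B i (τ i) := by
  rw [← det_transpose A, ← det_transpose B, det_apply', det_apply', Finset.sum_mul_sum]
  simp only [transpose_apply, Finset.prod_mul_distrib]
  exact Finset.sum_congr rfl fun σ _ => Finset.sum_congr rfl fun τ _ => by ring

theorem sum_sum_perm_sign_mul_prod (M : Matrix ι ι R) :
    ∑ σ : Perm ι, ∑ τ : Perm ι, ((Perm.sign σ : ℤ) : R) * (Perm.sign τ : ℤ) * ∏ i, M (σ i) (τ i)
      = (Fintype.card ι).factorial * M.det := by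
  have inner (σ : Perm ι) :
      ∑ τ : Perm ι, ((Perm.sign σ : ℤ) : R) * (Perm.sign τ : ℤ) * ∏ i, M (σ i) (τ i) = M.det := by
    rw [det_apply']
    refine Fintype.sum_equiv ((Equiv.inv _).trans (Equiv.mulLeft σ)) _ _ fun τ => ?_
    have hprod : ∏ i, M (σ i) (τ i) = ∏ k, M ((σ * τ⁻¹) k) k := by
      rw [← Equiv.prod_comp τ (fun k => M ((σ * τ⁻¹) k) k)]
      simp
    simp [hprod, Perm.sign_mul, Perm.sign_inv]
  simp only [inner, Finset.sum_const, Finset.card_univ, Fintype.card_perm, nsmul_eq_mul]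

end Matrix

theorem integral_det_mul_det_eq_factorial_mul_det_integral {ι α 𝕜 : Type*} [Fintype ι]
    [DecidableEq ι] [RCLike 𝕜] [MeasurableSpace α] {μ : Measure α} [SigmaFinite μ]
    (f g : ι → α → 𝕜) (hfg : ∀ i j, Integrable (fun x => f i x * g j x) μ) :
    ∫ x : ι → α, (of fun i j => f j (x i)).det * (of fun i j => g j (x i)).det
        ∂(Measure.pi fun _ => μ)
      = ((Fintype.card ι).factorial : 𝕜) * (of fun i j => ∫ x, f i x * g j x ∂μ).det := by
  have hterm (σ τ : Perm ι) : Integrable (fun x : ι → α => ∏ i, f (σ i) (x i) * g (τ i) (x i))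
      (Measure.pi fun _ => μ) :=
    Integrable.fintype_prod (f := fun i y => f (σ i) y * g (τ i) y) fun i => hfg _ _
  simp only [det_mul_det_eq_sum_sum_perm, of_apply]
  rw [integral_finsetSum _ fun σ _ => integrable_finsetSum _ fun τ _ => (hterm σ τ).const_mul _]
  simp only [integral_finsetSum _ fun τ _ => (hterm _ τ).const_mul _, integral_const_mul]
  rw [← sum_sum_perm_sign_mul_prod]
  refine Finset.sum_congr rfl fun σ _ => Finset.sum_congr rfl fun τ _ => ?_
  simp only [integral_fintype_prod_eq_prod (fun i y => f (σ i) y * g (τ i) y), of_apply]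

theorem Polynomial.integrable_eval_mul_s15 {μ : Measure ℝ} {w : ℝ → ℝ} (hw_meas : Measurable w)
    (hw_nonneg : ∀ x, 0 ≤ w x) (hw_mom : ∀ k : ℕ, Integrable (fun x => |x| ^ k * w x) μ)
    (Q : ℝ[X]) : Integrable (fun x => Q.eval x * w x) μ := by
  have hpow (k : ℕ) : Integrable (fun x => x ^ k * w x) μ := by
    refine (hw_mom k).mono' ((measurable_id.pow_const k).mul hw_meas).aestronglyMeasurable ?_
    filter_upwards with x
    rw [Real.norm_eq_abs, abs_mul, abs_pow, abs_of_nonneg (hw_nonneg x)]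
  simp only [eval_eq_sum_range, Finset.sum_mul, mul_assoc]
  exact integrable_finsetSum _ fun k _ => (hpow k).const_mul _

theorem heine_partition_function_general (w : ℝ → ℝ)
    (hw_meas : Measurable w) (hw_nonneg : ∀ x, 0 ≤ w x)
    (hw_mom : ∀ k : ℕ, Integrable (fun x => |x| ^ k * w x))
    (P : ℕ → Polynomial ℝ) (hP : ∀ m, (P m).Monic) (hPdeg : ∀ m, (P m).natDegree = m)
    (h : ℕ → ℝ)
    (horth : ∀ m k : ℕ,
      (∫ x : ℝ, (P m).eval x * (P k).eval x * w x) = if m = k then h m else 0)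
    (n : ℕ) :
    (∫ lam : Fin n → ℝ,
        (∏ i : Fin n, ∏ j ∈ Finset.Ioi i, (lam j - lam i) ^ 2) * ∏ i, w (lam i))
      = (n.factorial : ℝ) * ∏ m ∈ Finset.range n, h m := by
  have hintegrand (lam : Fin n → ℝ) :
      (∏ i : Fin n, ∏ j ∈ Finset.Ioi i, (lam j - lam i) ^ 2) * ∏ i, w (lam i)
        = (of fun i j : Fin n => (P j).eval (lam i)).det
          * (of fun i j : Fin n => w (lam i) * (P j).eval (lam i)).det := by
    have hcol := det_mul_column (fun i => w (lam i)) (of fun i j : Fin n => (P j).eval (lam i))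
    simp only [of_apply] at hcol
    rw [hcol, ← det_eval_matrixOfPolynomials_eq_det_vandermonde lam (fun j => P j)
      (fun j => hPdeg j) (fun j => hP j), det_vandermonde]
    simp only [Finset.prod_pow]
    ring
  have hgram : (of fun i j : Fin n => ∫ x, (P i).eval x * (w x * (P j).eval x))
      = diagonal fun i : Fin n => h i := by
    ext i j
    rw [of_apply, diagonal_apply]
    convert horth i j using 1
    · simp only [mul_comm (w _), mul_assoc]
    · simp [Fin.val_inj]
  have handreief := integral_det_mul_det_eq_factorial_mul_det_integral (μ := volume)
    (fun (j : Fin n) x => (P j).eval x) (fun j x => w x * (P j).eval x) fun i j =>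
      ((P i * P j).integrable_eval_mul_s15 hw_meas hw_nonneg hw_mom).congr
        (ae_of_all _ fun x => by simp only [eval_mul]; ring)
  simp_rw [hintegrand]
  rw [volume_pi, handreief, hgram, det_diagonal, Fintype.card_fin, Fin.prod_univ_eq_prod_range]

/-- **Heine's formula for the partition function.**  Let `w : ℝ → [0,∞)` be a
measurable weight with all moments finite, and `(P m)` the monic orthogonal polynomials
for `w`: `deg P_m = m`, `∫ P_m P_k w = δ_{mk} h_m` with `h_m > 0`.  Then
`Z_n = ∫_{ℝⁿ} ∏_{i<j} (λ_j - λ_i)² ∏ᵢ w(λᵢ) dλ = n! ∏_{m=0}^{n-1} h_m`. -/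
theorem heine_partition_function (w : ℝ → ℝ)
    (hw_meas : Measurable w) (hw_nonneg : ∀ x, 0 ≤ w x)
    (hw_mom : ∀ k : ℕ, Integrable (fun x => |x| ^ k * w x))
    (P : ℕ → Polynomial ℝ) (hP : ∀ m, (P m).Monic) (hPdeg : ∀ m, (P m).natDegree = m)
    (h : ℕ → ℝ) (hpos : ∀ m, 0 < h m)
    (horth : ∀ m k : ℕ,
      (∫ x : ℝ, (P m).eval x * (P k).eval x * w x) = if m = k then h m else 0)
    (n : ℕ) (hn : 1 ≤ n) :
    (∫ lam : Fin n → ℝ,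
        (∏ i : Fin n, ∏ j ∈ Finset.Ioi i, (lam j - lam i) ^ 2) * ∏ i, w (lam i))
      = (n.factorial : ℝ) * ∏ m ∈ Finset.range n, h m :=
  heine_partition_function_general w hw_meas hw_nonneg hw_mom P hP hPdeg h horth n
end

section
/- Christoffel–Darboux formula: let w : ℝ → [0, ∞) be a measurable weight with all moments finite, and let (P_m)_{m ≥ 0} be monic real polynomials with deg P_m = m satisfying ∫_ℝ P_m(x) P_k(x) w(x) dx = δ_{mk} h_m with h_m > 0. Then for every n ≥ 1 and all real x ≠ y, ∑_{k=0}^{n−1} P_k(x) P_k(y) / h_k = (P_n(x) P_{n−1}(y) − P_{n−1}(x) P_n(y)) / (h_{n−1} (x − y)). -/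
/-!
Pairing polynomials against the weight, `⟪p, q⟫ = ∫ p q w`, is a bilinear form on `ℝ[X]`
(this is where the finite moments enter) for which multiplication by `X` is self-adjoint. Since
`deg P m = m`, `P k` is orthogonal to every polynomial of degree `< k`, and a polynomial of degree
`< d` orthogonal to `P 0, …, P (d - 1)` vanishes. Together these force the three-term recurrence
`X P_{k+1} = P_{k+2} + a_k P_{k+1} + (h_{k+1} / h_k) P_k`, under which `(x - y) K_n(x, y)`
telescopes to `(P_n(x) P_{n-1}(y) - P_{n-1}(x) P_n(y)) / h_{n-1}`.
-/

open MeasureTheory Polynomial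

namespace Polynomial

theorem degree_sub_C_coeff_mul_lt {R : Type*} [Ring R] {p q : R[X]} {d : ℕ}
    (hp : p.Monic) (hpd : p.natDegree = d) (hq : q.degree < ↑(d + 1)) :
    (q - C (q.coeff d) * p).degree < d := by
  rw [degree_lt_iff_coeff_zero] at hq ⊢
  intro m hm
  rw [coeff_sub, coeff_C_mul]
  rcases hm.eq_or_lt with rfl | hlt
  · rw [← hpd, hp.coeff_natDegree, mul_one, sub_self]
  · rw [hq m hlt, coeff_eq_zero_of_natDegree_lt (show p.natDegree < m by omega), mul_zero,
      sub_zero]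

theorem degree_X_mul_sub_lt {R : Type*} [Ring R] [Nontrivial R] {P : ℕ → R[X]}
    (hP : ∀ m, (P m).Monic) (hPdeg : ∀ m, (P m).natDegree = m) (k : ℕ) :
    (X * P k - P (k + 1)).degree < ↑(k + 1) := by
  have hXP : (X * P k).degree < ↑(k + 1 + 1) := by
    rw [X_mul, degree_mul_X, (degree_eq_iff_natDegree_eq (hP k).ne_zero).mpr (hPdeg k)]
    exact_mod_cast Nat.lt_succ_self _
  have hcoeff : (X * P k).coeff (k + 1) = 1 := by
    rw [coeff_X_mul, ← (hP k).coeff_natDegree, hPdeg]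
  simpa [hcoeff] using degree_sub_C_coeff_mul_lt (hP (k + 1)) (hPdeg (k + 1)) hXP

section MonicOrthogonal

variable {K : Type*} [Field K] {B : LinearMap.BilinForm K K[X]} {P : ℕ → K[X]} {h : ℕ → K}

structure IsMonicOrthogonal (B : LinearMap.BilinForm K K[X]) (P : ℕ → K[X]) (h : ℕ → K) :
    Prop where
  monic : ∀ m, (P m).Monic
  natDegree_eq : ∀ m, (P m).natDegree = m
  bilin_eq : ∀ m k, B (P m) (P k) = if m = k then h m else 0

namespace IsMonicOrthogonal

theorem degree_eq (hP : IsMonicOrthogonal B P h) (m : ℕ) : (P m).degree = m :=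
  (degree_eq_iff_natDegree_eq (hP.monic m).ne_zero).mpr (hP.natDegree_eq m)

theorem bilin_eq_zero_of_degree_lt (hP : IsMonicOrthogonal B P h) {k : ℕ} {q : K[X]}
    (hq : q.degree < k) : B (P k) q = 0 := by
  suffices ∀ d ≤ k, ∀ q : K[X], q.degree < d → B (P k) q = 0 from this k le_rfl q hq
  intro d
  induction d with
  | zero =>
    intro _ q hq
    rw [degree_eq_bot.mp (Nat.WithBot.lt_zero_iff.mp hq), map_zero]
  | succ d ih =>
    intro hd q hq
    have hr := degree_sub_C_coeff_mul_lt (hP.monic d) (hP.natDegree_eq d) hq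
    rw [← sub_add_cancel q (C (q.coeff d) * P d), map_add, C_mul', map_smul, hP.bilin_eq,
      if_neg (by omega), smul_zero, add_zero, ← C_mul']
    exact ih (by omega) _ hr

theorem eq_zero_of_bilin_eq_zero (hP : IsMonicOrthogonal B P h) (hh : ∀ m, h m ≠ 0) {d : ℕ}
    {q : K[X]} (hq : q.degree < d) (hqP : ∀ j < d, B q (P j) = 0) : q = 0 := by
  induction d generalizing q with
  | zero => exact degree_eq_bot.mp (Nat.WithBot.lt_zero_iff.mp hq)
  | succ d ih =>
    set c := q.coeff d
    have hr : q - C c * P d = 0 := by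
      refine ih (degree_sub_C_coeff_mul_lt (hP.monic d) (hP.natDegree_eq d) hq) fun j hj => ?_
      rw [C_mul', map_sub, LinearMap.sub_apply, map_smul, LinearMap.smul_apply, hP.bilin_eq,
        if_neg (by omega), smul_zero, sub_zero, hqP j (by omega)]
    have hc : c = 0 := by
      have hqd := hqP d (by omega)
      rw [sub_eq_zero.mp hr, C_mul', map_smul, LinearMap.smul_apply, hP.bilin_eq, if_pos rfl,
        smul_eq_mul] at hqd
      exact (mul_eq_zero.mp hqd).resolve_right (hh d)
    rwa [hc, map_zero, zero_mul, sub_zero] at hr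

theorem X_mul_eq_three_term (hP : IsMonicOrthogonal B P h)
    (hX : ∀ p q, B (X * p) q = B p (X * q)) (hh : ∀ m, h m ≠ 0) (k : ℕ) :
    X * P (k + 1) = P (k + 2) + C (B (X * P (k + 1)) (P (k + 1)) / h (k + 1)) * P (k + 1)
      + C (h (k + 1) / h k) * P k := by
  have hlow : ∀ j < k, B (X * P (k + 1)) (P j) = 0 := fun j hj => by
    rw [hX]
    refine hP.bilin_eq_zero_of_degree_lt ?_
    rw [X_mul, degree_mul_X, hP.degree_eq]
    exact_mod_cast (by omega : j + 1 < k + 1)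
  have hmid : B (X * P (k + 1)) (P k) = h (k + 1) := by
    rw [hX, ← add_sub_cancel (P (k + 1)) (X * P k), map_add, hP.bilin_eq, if_pos rfl,
      hP.bilin_eq_zero_of_degree_lt (degree_X_mul_sub_lt hP.monic hP.natDegree_eq k), add_zero]
  have hmem : ∀ m < k + 2, P m ∈ degreeLT K (k + 2) := fun m hm => by
    rw [mem_degreeLT, hP.degree_eq]
    exact_mod_cast hm
  rw [← sub_eq_zero]
  refine hP.eq_zero_of_bilin_eq_zero hh (d := k + 2) ?_ fun j hj => ?_
  · rw [← mem_degreeLT, C_mul', C_mul', sub_add_eq_sub_sub, sub_add_eq_sub_sub]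
    refine sub_mem (sub_mem ?_ (Submodule.smul_mem _ _ (hmem _ (by omega))))
      (Submodule.smul_mem _ _ (hmem _ (by omega)))
    exact mem_degreeLT.mpr (degree_X_mul_sub_lt hP.monic hP.natDegree_eq (k + 1))
  · simp only [C_mul', map_sub, map_add, map_smul, LinearMap.sub_apply, LinearMap.add_apply,
      LinearMap.smul_apply, hP.bilin_eq, smul_eq_mul]
    rcases (by omega : j < k ∨ j = k ∨ j = k + 1) with hj | hj | hj
    · rw [if_neg (show k + 2 ≠ j by omega), if_neg (show k + 1 ≠ j by omega),
        if_neg (show k ≠ j by omega), hlow j hj]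
      ring
    · subst j
      simp [hmid, div_mul_cancel₀ _ (hh k)]
    · subst j
      simp [div_mul_cancel₀ _ (hh (k + 1))]

theorem sub_mul_christoffelDarboux_sum (hP : IsMonicOrthogonal B P h)
    (hX : ∀ p q, B (X * p) q = B p (X * q)) (hh : ∀ m, h m ≠ 0) (x y : K) (m : ℕ) :
    (x - y) * ∑ k ∈ Finset.range (m + 1), (P k).eval x * (P k).eval y / h k
      = ((P (m + 1)).eval x * (P m).eval y - (P m).eval x * (P (m + 1)).eval y) / h m := by
  induction m with
  | zero =>
    rw [Finset.sum_range_one, (hP.monic 0).natDegree_eq_zero.mp (hP.natDegree_eq 0), zero_add,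
      (hP.monic 1).eq_X_add_C (hP.natDegree_eq 1)]
    simp only [eval_one, eval_add, eval_X, eval_C]
    ring
  | succ m ih =>
    have hrec (z : K) : (P (m + 1 + 1)).eval z = z * (P (m + 1)).eval z
        - B (X * P (m + 1)) (P (m + 1)) / h (m + 1) * (P (m + 1)).eval z
        - h (m + 1) / h m * (P m).eval z := by
      have := congrArg (eval z) (hP.X_mul_eq_three_term hX hh m)
      simp only [eval_mul, eval_add, eval_X, eval_C] at this
      linear_combination -this
    rw [Finset.sum_range_succ, mul_add, ih, hrec x, hrec y]
    field_simp [hh m, hh (m + 1)]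
    ring

end IsMonicOrthogonal

end MonicOrthogonal

end Polynomial

section WeightedIntegral

variable {μ : Measure ℝ} {w : ℝ → ℝ}

theorem integrable_eval_mul_of_moments (hw : ∀ k : ℕ, Integrable (fun x => |x| ^ k * w x) μ)
    (p : ℝ[X]) : Integrable (fun x => p.eval x * w x) μ := by
  have hw_meas : AEStronglyMeasurable w μ := by simpa using (hw 0).aestronglyMeasurable
  induction p using Polynomial.induction_on' with
  | add p q hp hq => simpa only [eval_add, add_mul, Pi.add_def] using hp.add hq
  | monomial i c =>
    have hpow : Integrable (fun x => x ^ i * w x) μ :=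
      (hw i).mono ((continuous_pow i).aestronglyMeasurable.mul hw_meas)
        (ae_of_all _ fun x => by simp)
    simpa only [eval_monomial, mul_assoc] using hpow.const_mul c

variable (μ w) in
noncomputable def weightedIntegralForm
    (hw : ∀ k : ℕ, Integrable (fun x => |x| ^ k * w x) μ) : LinearMap.BilinForm ℝ ℝ[X] :=
  (LinearMap.mul ℝ ℝ[X]).compr₂
    { toFun := fun p => ∫ x, p.eval x * w x ∂μ
      map_add' := fun p q => by
        simp only [eval_add, add_mul]
        exact integral_add (integrable_eval_mul_of_moments hw p)
          (integrable_eval_mul_of_moments hw q)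
      map_smul' := fun c p => by
        simp only [eval_smul, smul_eq_mul, mul_assoc, integral_const_mul, RingHom.id_apply] }

theorem weightedIntegralForm_apply (hw : ∀ k : ℕ, Integrable (fun x => |x| ^ k * w x) μ)
    (p q : ℝ[X]) :
    weightedIntegralForm μ w hw p q = ∫ x, p.eval x * q.eval x * w x ∂μ := by
  simp [weightedIntegralForm]

theorem weightedIntegralForm_X_mul (hw : ∀ k : ℕ, Integrable (fun x => |x| ^ k * w x) μ)
    (p q : ℝ[X]) :
    weightedIntegralForm μ w hw (X * p) q = weightedIntegralForm μ w hw p (X * q) := by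
  simp only [weightedIntegralForm, LinearMap.compr₂_apply, LinearMap.mul_apply', mul_assoc,
    mul_left_comm X]

end WeightedIntegral

theorem christoffel_darboux_general (w : ℝ → ℝ)
    (hw_mom : ∀ k : ℕ, Integrable (fun x => |x| ^ k * w x))
    (P : ℕ → Polynomial ℝ) (hP : ∀ m, (P m).Monic) (hPdeg : ∀ m, (P m).natDegree = m)
    (h : ℕ → ℝ) (hpos : ∀ m, 0 < h m)
    (horth : ∀ m k : ℕ,
      (∫ x : ℝ, (P m).eval x * (P k).eval x * w x) = if m = k then h m else 0)
    (n : ℕ) (hn : 1 ≤ n) (x y : ℝ) (hxy : x ≠ y) :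
    ∑ k ∈ Finset.range n, (P k).eval x * (P k).eval y / h k
      = ((P n).eval x * (P (n - 1)).eval y - (P (n - 1)).eval x * (P n).eval y)
          / (h (n - 1) * (x - y)) := by
  have hB : IsMonicOrthogonal (weightedIntegralForm volume w hw_mom) P h :=
    ⟨hP, hPdeg, fun m k => by rw [weightedIntegralForm_apply, horth]⟩
  obtain ⟨m, rfl⟩ : ∃ m, n = m + 1 := ⟨n - 1, by omega⟩
  rw [Nat.add_sub_cancel, ← div_div, eq_div_iff (sub_ne_zero.mpr hxy), mul_comm,
    hB.sub_mul_christoffelDarboux_sum (weightedIntegralForm_X_mul hw_mom)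
      (fun m => (hpos m).ne')]

/-- **Christoffel–Darboux formula.**  Let `w : ℝ → [0,∞)` be a measurable weight with
all moments finite and `(P m)` the monic orthogonal polynomials for `w` with norms
`h m > 0`.  Then for `n ≥ 1` and `x ≠ y`,
`∑_{k=0}^{n-1} P_k(x) P_k(y)/h_k
  = (P_n(x) P_{n-1}(y) - P_{n-1}(x) P_n(y)) / (h_{n-1} (x - y))`. -/
theorem christoffel_darboux (w : ℝ → ℝ)
    (hw_meas : Measurable w) (hw_nonneg : ∀ x, 0 ≤ w x)
    (hw_mom : ∀ k : ℕ, Integrable (fun x => |x| ^ k * w x))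
    (P : ℕ → Polynomial ℝ) (hP : ∀ m, (P m).Monic) (hPdeg : ∀ m, (P m).natDegree = m)
    (h : ℕ → ℝ) (hpos : ∀ m, 0 < h m)
    (horth : ∀ m k : ℕ,
      (∫ x : ℝ, (P m).eval x * (P k).eval x * w x) = if m = k then h m else 0)
    (n : ℕ) (hn : 1 ≤ n) (x y : ℝ) (hxy : x ≠ y) :
    ∑ k ∈ Finset.range n, (P k).eval x * (P k).eval y / h k
      = ((P n).eval x * (P (n - 1)).eval y - (P (n - 1)).eval x * (P n).eval y)
          / (h (n - 1) * (x - y)) :=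
  christoffel_darboux_general w hw_mom P hP hPdeg h hpos horth n hn x y hxy
end
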